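/- Let ℝ⁴₊ := {x ∈ ℝ⁴ : x₂² + x₃² + x₄² ≤ 2x₁x₂ and x₁ ≥ 0} and let A ∈ ℝ^{4×4} be the block-diagonal matrix with upper-left 2×2 block [[0,1],[0,0]] and lower-right 2×2 block [[0, 4π],[−π, 0]]. Identify the dual of ℝ⁴ with ℝ⁴ via the standard inner product; then the dual cone of ℝ⁴₊ is X₊' = {x ∈ ℝ⁴ : x₃² + x₄² ≤ x₁² + 2x₁x₂ and x₁ + x₂ ≥ 0}, and the dual semigroup (e^{tAᵀ})_{t≥0} is individually eventually nonnegative with respect to X₊': for each x ∈ X₊' there exists t₀ ≥ 0 such that e^{tAᵀ} x ∈ X₊' for all t ≥ t₀. -/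

import Mathlib

/-!
In the coordinates `(x₀, x₀ - x₁, x₂, x₃)` the cone is the Lorentz cone, so by Cauchy–Schwarz its
dual is again a Lorentz cone, `y₁² + y₂² + y₃² ≤ (y₀ + y₁)²`, `0 ≤ y₀ + y₁`.

The transposed generator splits as `Aᵀ = N + 2π J` into commuting parts with `N² = 0` and
`J² = -P`, where `P` projects onto the last two coordinates; hence
`e^{tAᵀ} = (1 + tN) ((1 - P) + cos (2πt) P + sin (2πt) J)`. Along this flow the form
`q(y) = y₀² + 2 y₀ y₁` grows by `2t y₀²`, while the twisted rotation at most quadruples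
`y₂² + y₃² ≤ q(y)`. So `e^{tAᵀ} y` lies in the dual cone as soon as `3 q(y) ≤ 2t y₀²`.
-/

open scoped Matrix

/-- The linearly transformed ice cream cone in `ℝ⁴`. -/
def transformedIceCreamCone : Set (Fin 4 → ℝ) :=
  {x | (x 1) ^ 2 + (x 2) ^ 2 + (x 3) ^ 2 ≤ 2 * x 0 * x 1 ∧ 0 ≤ x 0}

/-- The block-diagonal matrix with blocks `[[0,1],[0,0]]` and `[[0,4π],[-π,0]]`. -/
noncomputable def exampleMatrixA : Matrix (Fin 4) (Fin 4) ℝ :=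
  !![0, 1, 0, 0; 0, 0, 0, 0; 0, 0, 0, 4 * Real.pi; 0, 0, -Real.pi, 0]

open NormedSpace

section TopologicalAlgebra

variable {𝔸 : Type*} [Ring 𝔸] [TopologicalSpace 𝔸] [IsTopologicalRing 𝔸]

theorem NormedSpace.exp_eq_one_add_of_mul_self_eq_zero [Algebra ℚ 𝔸] {n : 𝔸} (hn : n * n = 0) :
    exp n = 1 + n := by
  have hvanish : ∀ k ∉ Finset.range 2, ((k.factorial : ℚ))⁻¹ • n ^ k = 0 := by
    intro k hk
    obtain ⟨m, rfl⟩ := Nat.exists_eq_add_of_le (not_lt.mp (Finset.mem_range.not.mp hk))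
    rw [pow_add, sq, hn, zero_mul, smul_zero]
  simp only [exp_eq_tsum_rat]
  rw [tsum_eq_sum hvanish]
  simp [Finset.sum_range_succ]

variable [Algebra ℝ 𝔸] [ContinuousSMul ℝ 𝔸] [T2Space 𝔸]

theorem NormedSpace.exp_smul_of_mul_self_eq_neg {p j : 𝔸} (hp : IsIdempotentElem p)
    (hpj : p * j = j) (hj : j * j = -p) (θ : ℝ) :
    exp (θ • j) = (1 - p) + Real.cos θ • p + Real.sin θ • j := by
  have hj_sq_pow (k : ℕ) : j ^ (2 * k) = ((-1 : ℝ) ^ k) • p ^ k := by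
    rw [pow_mul, sq, hj, ← neg_one_smul ℝ p, smul_pow]
  have hp_pow_mul (k : ℕ) : p ^ k * j = j := by
    induction k with
    | zero => rw [pow_zero, one_mul]
    | succ k ih => rw [pow_succ, mul_assoc, hpj, ih]
  simp only [exp_eq_tsum ℝ]
  refine HasSum.tsum_eq (HasSum.even_add_odd ?_ ?_)
  · -- the constant term `1 = (1 - p) + p` is the only even term not absorbed by `cos θ • p`
    convert (hasSum_ite_eq 0 (1 - p)).add ((Real.hasSum_cos θ).smul_const p) using 1
    funext k
    rcases k with _ | k
    · simp
    · rw [smul_pow, hj_sq_pow, hp.pow_succ_eq, smul_smul, smul_smul, if_neg k.succ_ne_zero,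
        zero_add]
      congr 1
      ring
  · convert (Real.hasSum_sin θ).smul_const j using 1
    funext k
    rw [smul_pow, pow_succ j, hj_sq_pow, smul_mul_assoc, hp_pow_mul, smul_smul, smul_smul]
    congr 1
    ring

end TopologicalAlgebra

def exampleShear : Matrix (Fin 4) (Fin 4) ℝ :=
  !![0, 0, 0, 0; 1, 0, 0, 0; 0, 0, 0, 0; 0, 0, 0, 0]

noncomputable def exampleRotation : Matrix (Fin 4) (Fin 4) ℝ :=
  !![0, 0, 0, 0; 0, 0, 0, 0; 0, 0, 0, -1 / 2; 0, 0, 2, 0]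

def exampleRotationPlane : Matrix (Fin 4) (Fin 4) ℝ :=
  !![0, 0, 0, 0; 0, 0, 0, 0; 0, 0, 1, 0; 0, 0, 0, 1]

theorem exampleMatrixA_transpose :
    exampleMatrixAᵀ = exampleShear + (2 * Real.pi) • exampleRotation := by
  ext i j
  fin_cases i <;> fin_cases j <;> norm_num [exampleMatrixA, exampleShear, exampleRotation]
  all_goals ring

theorem exampleShear_mul_self : exampleShear * exampleShear = 0 := by
  ext i j
  fin_cases i <;> fin_cases j <;> simp [exampleShear, Matrix.mul_apply, Fin.sum_univ_four]

theorem exampleShear_mul_exampleRotation : exampleShear * exampleRotation = 0 := by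
  ext i j
  fin_cases i <;> fin_cases j <;>
    simp [exampleShear, exampleRotation, Matrix.mul_apply, Fin.sum_univ_four]

theorem exampleRotation_mul_exampleShear : exampleRotation * exampleShear = 0 := by
  ext i j
  fin_cases i <;> fin_cases j <;>
    simp [exampleShear, exampleRotation, Matrix.mul_apply, Fin.sum_univ_four]

theorem isIdempotentElem_exampleRotationPlane : IsIdempotentElem exampleRotationPlane := by
  ext i j
  fin_cases i <;> fin_cases j <;> simp [exampleRotationPlane, Matrix.mul_apply, Fin.sum_univ_four]

theorem exampleRotationPlane_mul_exampleRotation :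
    exampleRotationPlane * exampleRotation = exampleRotation := by
  ext i j
  fin_cases i <;> fin_cases j <;>
    simp [exampleRotationPlane, exampleRotation, Matrix.mul_apply, Fin.sum_univ_four]

theorem exampleRotation_mul_self : exampleRotation * exampleRotation = -exampleRotationPlane := by
  ext i j
  fin_cases i <;> fin_cases j <;>
    simp [exampleRotationPlane, exampleRotation, Matrix.mul_apply, Fin.sum_univ_four, neg_div]

theorem exp_smul_exampleMatrixA_transpose (t : ℝ) :
    exp (t • exampleMatrixAᵀ) =
      !![1, 0, 0, 0;
         t, 1, 0, 0;
         0, 0, Real.cos (2 * Real.pi * t), -Real.sin (2 * Real.pi * t) / 2;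
         0, 0, 2 * Real.sin (2 * Real.pi * t), Real.cos (2 * Real.pi * t)] := by
  have hcomm : Commute (t • exampleShear) ((2 * Real.pi * t) • exampleRotation) := by
    refine (Commute.smul_left ?_ _).smul_right _
    rw [Commute, SemiconjBy, exampleShear_mul_exampleRotation, exampleRotation_mul_exampleShear]
  rw [exampleMatrixA_transpose, smul_add, smul_smul, mul_comm t,
    Matrix.exp_add_of_commute _ _ hcomm,
    exp_eq_one_add_of_mul_self_eq_zero (by rw [smul_mul_smul_comm, exampleShear_mul_self, smul_zero]),
    exp_smul_of_mul_self_eq_neg isIdempotentElem_exampleRotationPlane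
      exampleRotationPlane_mul_exampleRotation exampleRotation_mul_self]
  ext i j
  fin_cases i <;> fin_cases j <;>
    simp [exampleShear, exampleRotation, exampleRotationPlane, Matrix.mul_apply, Fin.sum_univ_four] <;>
    ring

def dualIceCreamCone : Set (Fin 4 → ℝ) :=
  {x | (x 2) ^ 2 + (x 3) ^ 2 ≤ (x 0) ^ 2 + 2 * x 0 * x 1 ∧ 0 ≤ x 0 + x 1}

theorem neg_le_mul_of_sq_sum_le {A B a₁ a₂ a₃ b₁ b₂ b₃ : ℝ} (hA : 0 ≤ A) (hB : 0 ≤ B)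
    (ha : a₁ ^ 2 + a₂ ^ 2 + a₃ ^ 2 ≤ A ^ 2) (hb : b₁ ^ 2 + b₂ ^ 2 + b₃ ^ 2 ≤ B ^ 2) :
    -(a₁ * b₁ + a₂ * b₂ + a₃ * b₃) ≤ A * B := by
  have cauchy_schwarz : (a₁ * b₁ + a₂ * b₂ + a₃ * b₃) ^ 2
      ≤ (a₁ ^ 2 + a₂ ^ 2 + a₃ ^ 2) * (b₁ ^ 2 + b₂ ^ 2 + b₃ ^ 2) := by
    nlinarith [sq_nonneg (a₁ * b₂ - a₂ * b₁), sq_nonneg (a₁ * b₃ - a₃ * b₁),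
      sq_nonneg (a₂ * b₃ - a₃ * b₂)]
  have : (a₁ * b₁ + a₂ * b₂ + a₃ * b₃) ^ 2 ≤ (A * B) ^ 2 := by
    rw [mul_pow]
    exact cauchy_schwarz.trans (mul_le_mul ha hb (by positivity) (by positivity))
  exact neg_le.mp (abs_le_of_sq_le_sq' this (by positivity)).1

theorem dual_transformedIceCreamCone :
    {y : Fin 4 → ℝ | ∀ x ∈ transformedIceCreamCone, 0 ≤ y ⬝ᵥ x} = dualIceCreamCone := by
  ext y
  simp only [Set.mem_ofPred_eq, dualIceCreamCone, transformedIceCreamCone, dotProduct,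
    Fin.sum_univ_four]
  constructor
  · intro hy
    have hsum : 0 ≤ y 0 + y 1 := by simpa using hy ![1, 1, 0, 0] (by simp)
    set w := √(y 1 ^ 2 + y 2 ^ 2 + y 3 ^ 2)
    have hw_nonneg : 0 ≤ w := Real.sqrt_nonneg _
    have hw_sq : w ^ 2 = y 1 ^ 2 + y 2 ^ 2 + y 3 ^ 2 := Real.sq_sqrt (by positivity)
    have hpair : 0 ≤ w * (y 0 + y 1 - w) := by
      have := hy ![w, w - y 1, -y 2, -y 3] (by
        simp only [Fin.isValue, Matrix.cons_val_one, Matrix.cons_val_zero, Matrix.cons_val,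
          even_two, Even.neg_pow]
        constructor <;> nlinarith)
      simp only [Fin.isValue, Matrix.cons_val_zero, Matrix.cons_val_one, Matrix.cons_val, mul_neg,
        le_add_neg_iff_add_le, zero_add] at this
      nlinarith
    have hw_le : w ≤ y 0 + y 1 := by
      rcases hw_nonneg.eq_or_lt with hw | hw
      · rwa [← hw]
      · nlinarith
    refine ⟨?_, hsum⟩
    nlinarith [mul_le_mul hw_le hw_le hw_nonneg hsum]
  · rintro ⟨hq, hsum⟩ x ⟨hx, hx0⟩
    have := neg_le_mul_of_sq_sum_le (a₁ := y 1) (a₂ := y 2) (a₃ := y 3) (b₁ := x 1 - x 0)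
      (b₂ := x 2) (b₃ := x 3) hsum hx0 (by nlinarith) (by nlinarith)
    nlinarith

theorem cos_sin_scaled_sq_add_sq_le (θ a b : ℝ) :
    (Real.cos θ * a - Real.sin θ / 2 * b) ^ 2 + (2 * Real.sin θ * a + Real.cos θ * b) ^ 2 ≤
      4 * (a ^ 2 + b ^ 2) := by
  nlinarith [Real.sin_sq_add_cos_sq θ, sq_nonneg (Real.cos θ * a - Real.sin θ / 2 * b),
    sq_nonneg b]

theorem exp_smul_mulVec_mem_dualIceCreamCone {y : Fin 4 → ℝ} (hy : y ∈ dualIceCreamCone)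
    {t : ℝ} (ht : 0 ≤ t) (hgrowth : 3 * (y 0 ^ 2 + 2 * y 0 * y 1) ≤ 2 * t * y 0 ^ 2) :
    exp (t • exampleMatrixAᵀ) *ᵥ y ∈ dualIceCreamCone := by
  obtain ⟨hq, hsum⟩ := hy
  have hy0 : 0 ≤ y 0 := by nlinarith
  have hrot := cos_sin_scaled_sq_add_sq_le (2 * Real.pi * t) (y 2) (y 3)
  rw [exp_smul_exampleMatrixA_transpose]
  simp only [dualIceCreamCone, Fin.isValue, Matrix.cons_mulVec, dotProduct, Fin.sum_univ_four,
    Matrix.cons_val_zero, one_mul, Matrix.cons_val_one, zero_mul, add_zero, Matrix.cons_val,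
    zero_add, Matrix.empty_mulVec, Set.mem_ofPred_eq]
  constructor <;> nlinarith

theorem exists_forall_ge_exp_smul_mulVec_mem_dualIceCreamCone {y : Fin 4 → ℝ}
    (hy : y ∈ dualIceCreamCone) :
    ∃ t₀ : ℝ, 0 ≤ t₀ ∧ ∀ t : ℝ, t₀ ≤ t → exp (t • exampleMatrixAᵀ) *ᵥ y ∈ dualIceCreamCone := by
  have hq : 0 ≤ y 0 ^ 2 + 2 * y 0 * y 1 := le_trans (by positivity) hy.1
  have ht₀ : 0 ≤ 3 * (y 0 ^ 2 + 2 * y 0 * y 1) / (2 * y 0 ^ 2) := by positivity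
  refine ⟨_, ht₀, fun t ht => exp_smul_mulVec_mem_dualIceCreamCone hy (ht₀.trans ht) ?_⟩
  -- `y 0 = 0` makes the division junk, but then `q(y) = 0`
  rcases eq_or_ne (y 0) 0 with h0 | h0
  · simp [h0]
  · rw [div_le_iff₀ (by positivity)] at ht
    linarith

/-- Identifying the dual of `ℝ⁴` with `ℝ⁴` via the standard inner product,
the dual cone of the transformed ice cream cone is
`{x | x₃² + x₄² ≤ x₁² + 2 x₁ x₂ and x₁ + x₂ ≥ 0}`, and the dual semigroup `(e^{tAᵀ})_{t ≥ 0}`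
is individually eventually nonnegative with respect to this dual cone. -/
theorem exampleDualSemigroup_individually_eventually_nonneg :
    ({y : Fin 4 → ℝ | ∀ x ∈ transformedIceCreamCone, 0 ≤ y ⬝ᵥ x} =
      {x : Fin 4 → ℝ | (x 2) ^ 2 + (x 3) ^ 2 ≤ (x 0) ^ 2 + 2 * x 0 * x 1 ∧ 0 ≤ x 0 + x 1}) ∧
    (∀ y ∈ {y' : Fin 4 → ℝ | ∀ x ∈ transformedIceCreamCone, 0 ≤ y' ⬝ᵥ x},
      ∃ t₀ : ℝ, 0 ≤ t₀ ∧ ∀ t : ℝ, t₀ ≤ t →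
        NormedSpace.exp (t • exampleMatrixAᵀ) *ᵥ y ∈
          {y' : Fin 4 → ℝ | ∀ x ∈ transformedIceCreamCone, 0 ≤ y' ⬝ᵥ x}) := by
  rw [dual_transformedIceCreamCone]
  exact ⟨rfl, fun y hy => exists_forall_ge_exp_smul_mulVec_mem_dualIceCreamCone hy⟩
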